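/- Let d ≥ 2, let {φ_x : x∈Ω} and {ψ_y : y∈Ω} be two mutually unbiased bases of a d-dimensional complex Hilbert space H with |Ω| = d, and let λ ∈ [1/(1−d), 1]. Denote by A_λ(x)^{1/2} the unique positive semidefinite square root of A_λ(x). Then A_λ(x)^{1/2} = u_λ·A(x) + (v_λ/√d)·1 for every x ∈ Ω, and the map C(x,y) = A_λ(x)^{1/2} B(y) A_λ(x)^{1/2} is a joint observable of A_λ and B_{γ_λ}; in particular, its second margin satisfies ∑_{x∈Ω} A_λ(x)^{1/2} B(y) A_λ(x)^{1/2} = B_{γ_λ}(y) for all y ∈ Ω. -/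

import Mathlib

open scoped InnerProductSpace

noncomputable section

/-- An observable with outcome set `Ω`: positive semidefinite operators summing to `1`. -/
def IsObservable {Ω H : Type*} [Fintype Ω] [NormedAddCommGroup H] [InnerProductSpace ℂ H]
    [CompleteSpace H] (A : Ω → H →L[ℂ] H) : Prop :=
  (∀ x, (A x).IsPositive) ∧ (∑ x, A x) = 1

/-- `C` is a joint observable of `A` and `B`. -/
def IsJointObservable {Ω H : Type*} [Fintype Ω] [NormedAddCommGroup H] [InnerProductSpace ℂ H]
    [CompleteSpace H] (C : Ω × Ω → H →L[ℂ] H) (A B : Ω → H →L[ℂ] H) : Prop :=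
  IsObservable C ∧ (∀ x, (∑ y, C (x, y)) = A x) ∧ (∀ y, (∑ x, C (x, y)) = B y)

/-- The set of all compatible pairs of observables. -/
def CO (Ω H : Type*) [Fintype Ω] [NormedAddCommGroup H] [InnerProductSpace ℂ H]
    [CompleteSpace H] : Set ((Ω → H →L[ℂ] H) × (Ω → H →L[ℂ] H)) :=
  {AB | ∃ C, IsJointObservable C AB.1 AB.2}

/-- The rank-one operator `|φ⟩⟨φ|`. -/
def outer {H : Type*} [NormedAddCommGroup H] [InnerProductSpace ℂ H] (φ : H) : H →L[ℂ] H :=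
  (innerSL ℂ φ).smulRight φ

/-- The constant `u_ν = (1/√d)·(√(1+(d−1)ν) − √(1−ν))`. -/
def uConst (d : ℕ) (ν : ℝ) : ℝ :=
  (1 / Real.sqrt d) * (Real.sqrt (1 + ((d : ℝ) - 1) * ν) - Real.sqrt (1 - ν))

/-- The constant `v_ν = √(1−ν)`. -/
def vConst (ν : ℝ) : ℝ := Real.sqrt (1 - ν)

/-- The constant `γ_ν = (1/d)·[(d−2)(1−ν) + 2·√(1−ν)·√(1+(d−1)ν)]`. -/
def gammaConst (d : ℕ) (ν : ℝ) : ℝ :=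
  (1 / (d : ℝ)) * (((d : ℝ) - 2) * (1 - ν)
    + 2 * Real.sqrt (1 - ν) * Real.sqrt (1 + ((d : ℝ) - 1) * ν))

/-!
Write `P = |φ_x⟩⟨φ_x|`, `Q = |ψ_y⟩⟨ψ_y|`, `u = u_λ` and `c = v_λ / √d`. The operator
`u P + c 1 = (u + c) P + c (1 - P)` is positive since `u + c, c ≥ 0`, and it squares to `A_λ(x)`;
by uniqueness of positive square roots it is `A_λ(x)^{1/2}`. Summing the Lüders operators over `y`
gives `A_λ(x)^{1/2} (∑_y Q) A_λ(x)^{1/2} = A_λ(x)`. Summing over `x` instead, unbiasedness gives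
`P Q P = (1/d) P`, and with `∑_x P = 1` the sum collapses to `(2uc + dc²) Q + (u²/d) 1`, which is
`B_γ(y)` because `2uc + dc² = γ` and `u² = 1 - γ`.
-/

open InnerProductSpace

section Constants

variable {d : ℕ} {ν : ℝ}

theorem uConst_mul_self_add (hd : d ≠ 0) (h₁ : 0 ≤ 1 + ((d : ℝ) - 1) * ν) (h₂ : ν ≤ 1) :
    uConst d ν * uConst d ν + 2 * uConst d ν * (vConst ν / √d) = ν := by
  have hr : √(1 + ((d : ℝ) - 1) * ν) ^ 2 = 1 + ((d : ℝ) - 1) * ν := Real.sq_sqrt h₁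
  have hs : √(1 - ν) ^ 2 = 1 - ν := Real.sq_sqrt (by linarith)
  have ht : √(d : ℝ) ^ 2 = d := Real.sq_sqrt d.cast_nonneg
  calc uConst d ν * uConst d ν + 2 * uConst d ν * (vConst ν / √d)
      = (√(1 + ((d : ℝ) - 1) * ν) ^ 2 - √(1 - ν) ^ 2) / √(d : ℝ) ^ 2 := by
        rw [uConst, vConst]; ring
    _ = ν := by rw [hr, hs, ht]; field_simp; ring

theorem vConst_div_sqrt_mul_self (h₂ : ν ≤ 1) :
    vConst ν / √d * (vConst ν / √d) = (1 - ν) / d := by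
  rw [vConst, div_mul_div_comm, Real.mul_self_sqrt (by linarith),
    Real.mul_self_sqrt d.cast_nonneg]

theorem gammaConst_eq (h₂ : ν ≤ 1) :
    gammaConst d ν
      = 2 * uConst d ν * (vConst ν / √d) + d * (vConst ν / √d * (vConst ν / √d)) := by
  have hs : √(1 - ν) ^ 2 = 1 - ν := Real.sq_sqrt (by linarith)
  have ht : √(d : ℝ) ^ 2 = d := Real.sq_sqrt d.cast_nonneg
  calc gammaConst d ν
      = (2 * √(1 - ν) * √(1 + ((d : ℝ) - 1) * ν) + (d - 2) * √(1 - ν) ^ 2)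
          / √(d : ℝ) ^ 2 := by
        rw [gammaConst, hs, ht]; ring
    _ = _ := by rw [uConst, vConst]; ring

theorem uConst_mul_self (hd : d ≠ 0) (h₁ : 0 ≤ 1 + ((d : ℝ) - 1) * ν) (h₂ : ν ≤ 1) :
    uConst d ν * uConst d ν = 1 - gammaConst d ν := by
  have hr : √(1 + ((d : ℝ) - 1) * ν) ^ 2 = 1 + ((d : ℝ) - 1) * ν := Real.sq_sqrt h₁
  have hs : √(1 - ν) ^ 2 = 1 - ν := Real.sq_sqrt (by linarith)
  have ht : √(d : ℝ) ^ 2 = d := Real.sq_sqrt d.cast_nonneg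
  calc uConst d ν * uConst d ν
      = (√(1 + ((d : ℝ) - 1) * ν) ^ 2 + √(1 - ν) ^ 2
          - 2 * √(1 - ν) * √(1 + ((d : ℝ) - 1) * ν)) / √(d : ℝ) ^ 2 := by
        rw [uConst]; ring
    _ = 1 - gammaConst d ν := by rw [hr, hs, ht, gammaConst]; field_simp; ring

theorem uConst_add_vConst_div_sqrt_nonneg (d : ℕ) (ν : ℝ) :
    0 ≤ uConst d ν + vConst ν / √d := by
  have h : uConst d ν + vConst ν / √d = √(1 + ((d : ℝ) - 1) * ν) / √d := by
    rw [uConst, vConst]; ring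
  rw [h]
  positivity

end Constants

section Algebra

variable {R A : Type*}

theorem IsIdempotentElem.smul_add_smul_one_mul_self [CommSemiring R] [Semiring A]
    [Module R A] [IsScalarTower R A A] [SMulCommClass R A A] {p : A} (hp : IsIdempotentElem p)
    (u c : R) :
    (u • p + c • 1) * (u • p + c • 1) = (u * u + 2 * u * c) • p + (c * c) • (1 : A) := by
  simp only [add_mul, mul_add, smul_mul_assoc, mul_smul_comm, one_mul, mul_one, hp.eq]
  module

theorem sum_smul_add_smul_one_mul_mul [CommRing R] [Ring A] [Module R A]
    [IsScalarTower R A A] [SMulCommClass R A A] {ι : Type*} [Fintype ι] {P : ι → A}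
    (hP : ∑ i, P i = 1) {Q : A} {κ : R} (hPQP : ∀ i, P i * Q * P i = κ • P i) (u c : R) :
    ∑ i, (u • P i + c • 1) * Q * (u • P i + c • 1)
      = (2 * u * c + Fintype.card ι * (c * c)) • Q + (u * u * κ) • (1 : A) := by
  have hterm : ∀ i, (u • P i + c • 1) * Q * (u • P i + c • 1)
      = (u * u * κ) • P i + (u * c) • (P i * Q + Q * P i) + (c * c) • Q := by
    intro i
    simp only [add_mul, mul_add, smul_mul_assoc, mul_smul_comm, one_mul, mul_one, hPQP]
    module
  simp only [hterm, Finset.sum_add_distrib, ← Finset.smul_sum, ← Finset.sum_mul,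
    ← Finset.mul_sum, hP, one_mul, mul_one, Finset.sum_const, Finset.card_univ,
    ← Nat.cast_smul_eq_nsmul R]
  module

theorem sum_smul_add_div_card_smul_one [Field R] [CharZero R] [Ring A] [Module R A]
    {ι : Type*} [Fintype ι] [Nonempty ι] {P : ι → A} (hP : ∑ i, P i = 1) (t : R) :
    ∑ i, (t • P i + ((1 - t) / Fintype.card ι) • (1 : A)) = 1 := by
  have hcard : (Fintype.card ι : R) ≠ 0 := Nat.cast_ne_zero.mpr Fintype.card_ne_zero
  rw [Finset.sum_add_distrib, ← Finset.smul_sum, hP, Finset.sum_const, Finset.card_univ,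
    ← Nat.cast_smul_eq_nsmul R, smul_smul, mul_div_cancel₀ _ hcard, ← add_smul, add_sub_cancel,
    one_smul]

end Algebra

section CStarAlgebra

variable {A : Type*} [CStarAlgebra A] [PartialOrder A] [StarOrderedRing A]

theorem IsStarProjection.smul_add_smul_one_nonneg {p : A} (hp : IsStarProjection p)
    {u c : ℝ} (hc : 0 ≤ c) (huc : 0 ≤ u + c) : 0 ≤ u • p + c • (1 : A) := by
  rw [show u • p + c • (1 : A) = (u + c) • p + c • (1 - p) by module]
  exact add_nonneg (smul_nonneg huc hp.nonneg) (smul_nonneg hc hp.one_sub.nonneg)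

theorem IsStarProjection.eq_smul_add_smul_one_of_mul_self_eq {p s : A}
    (hp : IsStarProjection p) (hs : 0 ≤ s) {u c a b : ℝ} (hc : 0 ≤ c) (huc : 0 ≤ u + c)
    (ha : u * u + 2 * u * c = a) (hb : c * c = b) (h : s * s = a • p + b • 1) :
    s = u • p + c • 1 :=
  (CFC.mul_self_eq_mul_self_iff s _ hs (hp.smul_add_smul_one_nonneg hc huc)).mp <| by
    rw [h, hp.isIdempotentElem.smul_add_smul_one_mul_self, ha, hb]

end CStarAlgebra

section Outer

variable {H : Type*} [NormedAddCommGroup H] [InnerProductSpace ℂ H]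

theorem outer_eq_rankOne (a : H) : outer a = rankOne ℂ a a := rfl

theorem isStarProjection_outer [CompleteSpace H] {a : H} (ha : ‖a‖ = 1) :
    IsStarProjection (outer a) :=
  isStarProjection_rankOne_self ha

theorem outer_nonneg [CompleteSpace H] (a : H) : 0 ≤ outer a :=
  (ContinuousLinearMap.nonneg_iff_isPositive _).mpr (isPositive_rankOne_self a)

theorem OrthonormalBasis.sum_outer_eq_one {ι : Type*} [Fintype ι]
    (b : OrthonormalBasis ι ℂ H) : ∑ i, outer (b i) = 1 :=
  b.sum_rankOne_eq_id

theorem outer_mul_outer_mul_outer (a b : H) :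
    outer a * outer b * outer a = (‖⟪a, b⟫_ℂ‖ ^ 2 : ℝ) • outer a := by
  simp only [outer_eq_rankOne, ContinuousLinearMap.mul_def, rankOne_comp_rankOne,
    ContinuousLinearMap.smul_comp, smul_smul]
  rw [← inner_conj_symm b a, mul_comm, RCLike.conj_mul, ← RCLike.ofReal_pow,
    ← RCLike.real_smul_eq_coe_smul (K := ℂ)]

end Outer

theorem sqrt_formula_and_Luders_joint_general
    {H : Type*} [NormedAddCommGroup H] [InnerProductSpace ℂ H] [FiniteDimensional ℂ H]
    {Ω : Type*} [Fintype Ω]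
    (d : ℕ) (hd : 2 ≤ d) (hcard : Fintype.card Ω = d)
    (φ ψ : OrthonormalBasis Ω ℂ H)
    (hMUB : ∀ x y : Ω, ‖⟪φ x, ψ y⟫_ℂ‖ = 1 / Real.sqrt d)
    (lam : ℝ) (hlam : lam ∈ Set.Icc (1 / (1 - (d : ℝ))) 1)
    (S : Ω → H →L[ℂ] H)
    (hSpos : ∀ x, (S x).IsPositive)
    (hSsq : ∀ x, S x * S x =
      lam • outer (φ x) + ((1 - lam) / (d : ℝ)) • (1 : H →L[ℂ] H)) :
    (∀ x, S x = uConst d lam • outer (φ x)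
        + (vConst lam / Real.sqrt d) • (1 : H →L[ℂ] H)) ∧
    IsJointObservable (fun p : Ω × Ω => S p.1 * outer (ψ p.2) * S p.1)
      (fun x => lam • outer (φ x) + ((1 - lam) / (d : ℝ)) • (1 : H →L[ℂ] H))
      (fun y => gammaConst d lam • outer (ψ y)
        + ((1 - gammaConst d lam) / (d : ℝ)) • (1 : H →L[ℂ] H)) ∧
    (∀ y, (∑ x, S x * outer (ψ y) * S x) =
      gammaConst d lam • outer (ψ y)
        + ((1 - gammaConst d lam) / (d : ℝ)) • (1 : H →L[ℂ] H)) := by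
  obtain ⟨hlam₁, hlam₂⟩ := hlam
  have hd₀ : d ≠ 0 := by omega
  have hν : 0 ≤ 1 + ((d : ℝ) - 1) * lam := by
    have hd₁ : (1 : ℝ) < d := by exact_mod_cast hd
    nlinarith [(div_le_iff_of_neg (by linarith : 1 - (d : ℝ) < 0)).mp hlam₁]
  have hS₀ x : 0 ≤ S x := (ContinuousLinearMap.nonneg_iff_isPositive _).mpr (hSpos x)
  have hS x : S x = uConst d lam • outer (φ x) + (vConst lam / √d) • 1 :=
    (isStarProjection_outer (φ.orthonormal.1 x)).eq_smul_add_smul_one_of_mul_self_eq (hS₀ x)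
      (div_nonneg (Real.sqrt_nonneg _) (Real.sqrt_nonneg _))
      (uConst_add_vConst_div_sqrt_nonneg d lam) (uConst_mul_self_add hd₀ hν hlam₂)
      (vConst_div_sqrt_mul_self hlam₂) (hSsq x)
  have hmargin₁ x : ∑ y, S x * outer (ψ y) * S x = S x * S x := by
    rw [← Finset.sum_mul, ← Finset.mul_sum, ψ.sum_outer_eq_one, mul_one]
  have hmargin₂ y : ∑ x, S x * outer (ψ y) * S x
      = gammaConst d lam • outer (ψ y) + ((1 - gammaConst d lam) / (d : ℝ)) • 1 := by
    have hPQP x : outer (φ x) * outer (ψ y) * outer (φ x) = (1 / (d : ℝ)) • outer (φ x) := by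
      rw [outer_mul_outer_mul_outer, hMUB, div_pow, one_pow, Real.sq_sqrt d.cast_nonneg]
    simp only [hS]
    rw [sum_smul_add_smul_one_mul_mul φ.sum_outer_eq_one hPQP, hcard, ← gammaConst_eq hlam₂,
      uConst_mul_self hd₀ hν hlam₂, mul_one_div]
  refine ⟨hS, ⟨⟨fun p => ?_, ?_⟩, fun x => (hmargin₁ x).trans (hSsq x), hmargin₂⟩, hmargin₂⟩
  · exact (ContinuousLinearMap.nonneg_iff_isPositive _).mp
      (conjugate_nonneg_of_nonneg (outer_nonneg _) (hS₀ p.1))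
  · have : Nonempty Ω := Fintype.card_pos_iff.mp (by omega)
    simp only [Fintype.sum_prod_type, hmargin₁, hSsq, ← hcard]
    exact sum_smul_add_div_card_smul_one φ.sum_outer_eq_one lam

theorem sqrt_formula_and_Luders_joint
    {H : Type*} [NormedAddCommGroup H] [InnerProductSpace ℂ H] [FiniteDimensional ℂ H]
    {Ω : Type*} [Fintype Ω] [DecidableEq Ω]
    (d : ℕ) (hd : 2 ≤ d) (hcard : Fintype.card Ω = d) (hdim : Module.finrank ℂ H = d)
    (φ ψ : OrthonormalBasis Ω ℂ H)
    (hMUB : ∀ x y : Ω, ‖⟪φ x, ψ y⟫_ℂ‖ = 1 / Real.sqrt d)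
    (lam : ℝ) (hlam : lam ∈ Set.Icc (1 / (1 - (d : ℝ))) 1)
    (S : Ω → H →L[ℂ] H)
    (hSpos : ∀ x, (S x).IsPositive)
    (hSsq : ∀ x, S x * S x =
      lam • outer (φ x) + ((1 - lam) / (d : ℝ)) • (1 : H →L[ℂ] H)) :
    (∀ x, S x = uConst d lam • outer (φ x)
        + (vConst lam / Real.sqrt d) • (1 : H →L[ℂ] H)) ∧
    IsJointObservable (fun p : Ω × Ω => S p.1 * outer (ψ p.2) * S p.1)
      (fun x => lam • outer (φ x) + ((1 - lam) / (d : ℝ)) • (1 : H →L[ℂ] H))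
      (fun y => gammaConst d lam • outer (ψ y)
        + ((1 - gammaConst d lam) / (d : ℝ)) • (1 : H →L[ℂ] H)) ∧
    (∀ y, (∑ x, S x * outer (ψ y) * S x) =
      gammaConst d lam • outer (ψ y)
        + ((1 - gammaConst d lam) / (d : ℝ)) • (1 : H →L[ℂ] H)) :=
  sqrt_formula_and_Luders_joint_general d hd hcard φ ψ hMUB lam hlam S hSpos hSsq
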